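/- If the dual LP is infeasible (no y ≥ 0 with Aᵀy ≥ c), and the primal LP is feasible, then the primal LP is unbounded. -/

import Mathlib

/-!
Farkas' lemma in matrix form: the cone spanned by the rows of `A` and the vectors `-eⱼ` is
closed, because by Carathéodory's argument it is a finite union of cones spanned by linearly
independent vectors, i.e. of injective linear images of the nonnegative orthant. If the dual is
infeasible, `c` lies outside this cone, and a separating functional gives `d ≥ 0` with `A d ≤ 0`
and `cᵀd > 0`. Starting from a feasible `x₀`, the points `x₀ + t d` (`t ≥ 0`) stay feasible while
the objective `cᵀx₀ + t cᵀd` tends to infinity.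
-/

open Matrix Set PointedCone Filter

section Hull

variable {R E ι : Type*} [Semiring R] [PartialOrder R] [IsOrderedRing R]
  [AddCommMonoid E] [Module R E] [Fintype ι]

theorem PointedCone.mem_hull_range_iff {v : ι → E} {x : E} :
    x ∈ hull R (range v) ↔ ∃ w : ι → R, 0 ≤ w ∧ ∑ i, w i • v i = x := by
  rw [Submodule.mem_span_range_iff_exists_fun]
  constructor
  · rintro ⟨c, rfl⟩
    exact ⟨fun i => c i, fun i => (c i).2, rfl⟩
  · rintro ⟨w, hw, rfl⟩
    exact ⟨fun i => ⟨w i, hw i⟩, rfl⟩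

end Hull

section Caratheodory

variable {𝕜 E ι : Type*} [Field 𝕜] [LinearOrder 𝕜] [IsStrictOrderedRing 𝕜]
  [AddCommGroup E] [Module 𝕜 E] [Fintype ι]

theorem exists_nonneg_vanishing_weights_of_sum_smul_eq_zero {v : ι → E} {g w : ι → 𝕜}
    (hg : ∑ i, g i • v i = 0) {i₀ : ι} (hi₀ : 0 < g i₀) (hw : 0 ≤ w) :
    ∃ j, ∃ w' : ι → 𝕜, 0 ≤ w' ∧ w' j = 0 ∧ ∑ i, w' i • v i = ∑ i, w i • v i := by
  classical
  -- Move from `w` along `-g` until the first weight vanishes.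
  obtain ⟨j, hj, hmin⟩ := (Finset.univ.filter (0 < g ·)).exists_min_image
    (fun i => w i / g i) ⟨i₀, by simpa using hi₀⟩
  have hgj : 0 < g j := (Finset.mem_filter.1 hj).2
  set t := w j / g j
  have ht : 0 ≤ t := div_nonneg (hw j) hgj.le
  refine ⟨j, w - t • g, fun i => ?_, ?_, ?_⟩
  · show 0 ≤ w i - t * g i
    rcases le_or_gt (g i) 0 with hgi | hgi
    · exact sub_nonneg.2 ((mul_nonpos_of_nonneg_of_nonpos ht hgi).trans (hw i))
    · exact sub_nonneg.2 ((le_div_iff₀ hgi).1 (hmin i (by simpa using hgi)))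
  · simp [t, div_mul_cancel₀ _ hgj.ne']
  · simp [sub_smul, Finset.sum_sub_distrib, mul_smul, ← Finset.smul_sum, hg]

theorem hull_range_eq_iUnion_of_not_linearIndependent {v : ι → E}
    (hv : ¬LinearIndependent 𝕜 v) :
    (hull 𝕜 (range v) : Set E) = ⋃ j, hull 𝕜 (range fun i : {i // i ≠ j} => v i.1) := by
  classical
  obtain ⟨g, hg, i₀, hi₀⟩ := Fintype.not_linearIndependent_iff.1 hv
  wlog hpos : 0 < g i₀ generalizing g
  · exact this (-g) (by simp [neg_smul, hg]) (neg_ne_zero.2 hi₀)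
      (neg_pos.2 (lt_of_le_of_ne (not_lt.1 hpos) hi₀))
  ext x
  simp only [SetLike.mem_coe, mem_iUnion]
  constructor
  · intro hx
    obtain ⟨w, hw, rfl⟩ := mem_hull_range_iff.1 hx
    obtain ⟨j, w', hw', hw'j, hsum⟩ :=
      exists_nonneg_vanishing_weights_of_sum_smul_eq_zero hg hpos hw
    refine ⟨j, mem_hull_range_iff.2 ⟨fun i => w' i, fun i => hw' i, ?_⟩⟩
    rw [← hsum, Fintype.sum_eq_add_sum_subtype_ne _ j, hw'j, zero_smul, zero_add]
  · rintro ⟨j, hx⟩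
    exact Submodule.span_mono (range_comp_subset_range _ _) hx

end Caratheodory

theorem isClosed_hull_range {E : Type*} [AddCommGroup E] [Module ℝ E] [TopologicalSpace E]
    [IsTopologicalAddGroup E] [ContinuousSMul ℝ E] [T2Space E] {ι : Type*} [Fintype ι]
    (v : ι → E) : IsClosed (hull ℝ (range v) : Set E) := by
  induction h : Fintype.card ι using Nat.strong_induction_on generalizing ι with
  | _ n ih =>
  by_cases hv : LinearIndependent ℝ v
  · have hhull : (hull ℝ (range v) : Set E) = Fintype.linearCombination ℝ v '' Ici 0 := by
      ext x
      simp [mem_hull_range_iff, Fintype.linearCombination_apply]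
    rw [hhull]
    exact ((Fintype.linearCombination ℝ v).isClosedEmbedding_of_injective
      (LinearMap.ker_eq_bot.2 (linearIndependent_iff_injective_fintypeLinearCombination.1 hv))
      ).isClosedMap _ isClosed_Ici
  · classical
    rw [hull_range_eq_iUnion_of_not_linearIndependent hv]
    exact isClosed_iUnion_of_finite fun j =>
      ih _ (h ▸ Fintype.card_subtype_lt (p := (· ≠ j)) (x := j) (by simp)) _ rfl

theorem exists_strongDual_nonneg_of_notMem_hull_range {E : Type*} [AddCommGroup E] [Module ℝ E]
    [TopologicalSpace E] [IsTopologicalAddGroup E] [ContinuousSMul ℝ E] [LocallyConvexSpace ℝ E]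
    [T2Space E] {ι : Type*} [Fintype ι] (v : ι → E) {x : E} (hx : x ∉ hull ℝ (range v)) :
    ∃ f : StrongDual ℝ E, (∀ i, 0 ≤ f (v i)) ∧ f x < 0 := by
  obtain ⟨f, hf, hfx⟩ :=
    ProperCone.hyperplane_separation_point ⟨hull ℝ (range v), isClosed_hull_range v⟩ hx
  exact ⟨f, fun i => hf _ (subset_hull (mem_range_self i)), hfx⟩

theorem Matrix.exists_nonneg_mulVec_nonpos_dotProduct_pos {m n : Type*} [Fintype m] [Fintype n]
    [DecidableEq n] (A : Matrix m n ℝ) (c : n → ℝ) (h : ¬∃ y, 0 ≤ y ∧ c ≤ Aᵀ *ᵥ y) :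
    ∃ d, 0 ≤ d ∧ A *ᵥ d ≤ 0 ∧ 0 < c ⬝ᵥ d := by
  -- `c ≤ Aᵀ *ᵥ y` for some `y ≥ 0` says that `c` lies in the cone spanned by the rows of `A`
  -- and the vectors `-eⱼ`.
  set v : m ⊕ n → n → ℝ := Sum.elim (fun i => A i) (fun j => -Pi.single j 1)
  have hc : c ∉ hull ℝ (range v) := by
    rw [mem_hull_range_iff]
    rintro ⟨w, hw, hwc⟩
    refine h ⟨w ∘ Sum.inl, fun i => hw _, ?_⟩
    have : Aᵀ *ᵥ (w ∘ Sum.inl) - w ∘ Sum.inr = c := by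
      ext j
      simp [← hwc, v, Fintype.sum_sum_type, mulVec, dotProduct, Finset.sum_apply, Pi.single_apply,
        sub_eq_add_neg, mul_comm]
    rw [← this]
    exact sub_le_self _ fun j => hw _
  obtain ⟨f, hfv, hfc⟩ := exists_strongDual_nonneg_of_notMem_hull_range v hc
  set a := (dotProductEquiv ℝ n).symm (f : (n → ℝ) →ₗ[ℝ] ℝ)
  have hf : ∀ z, f z = a ⬝ᵥ z := fun z => by
    rw [← dotProductEquiv_apply_apply, LinearEquiv.apply_symm_apply]; rfl
  refine ⟨-a, fun j => ?_, fun i => ?_, ?_⟩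
  · simpa [hf, v] using hfv (Sum.inr j)
  · simpa [hf, v, mulVec, dotProduct_comm] using hfv (Sum.inl i)
  · simpa [hf, dotProduct_comm] using hfc

theorem dual_infeasible_primal_feasible_implies_unbounded
    (m n : ℕ) (A : Matrix (Fin m) (Fin n) ℝ) (b : Fin m → ℝ) (c : Fin n → ℝ)
    (hdual : ¬∃ y : Fin m → ℝ, 0 ≤ y ∧ c ≤ Aᵀ.mulVec y)
    (hprimal : ∃ x : Fin n → ℝ, A.mulVec x ≤ b ∧ 0 ≤ x) :
    ∀ K : ℝ, ∃ x : Fin n → ℝ, A.mulVec x ≤ b ∧ 0 ≤ x ∧ K < c ⬝ᵥ x := by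
  obtain ⟨d, hd, hAd, hcd⟩ := A.exists_nonneg_mulVec_nonpos_dotProduct_pos c hdual
  obtain ⟨x₀, hAx₀, hx₀⟩ := hprimal
  intro K
  have hobj : Tendsto (fun t : ℝ => c ⬝ᵥ (x₀ + t • d)) atTop atTop := by
    simpa [dotProduct_add, dotProduct_smul] using
      tendsto_atTop_add_const_left _ (c ⬝ᵥ x₀) (tendsto_id.atTop_mul_const hcd)
  obtain ⟨t, ht, hK⟩ := ((eventually_ge_atTop 0).and (hobj.eventually_gt_atTop K)).exists
  refine ⟨x₀ + t • d, ?_, add_nonneg hx₀ (smul_nonneg ht hd), hK⟩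
  rw [mulVec_add, mulVec_smul]
  exact add_le_of_le_of_nonpos hAx₀ (smul_nonpos_of_nonneg_of_nonpos ht hAd)
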